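/- Let x̄ ∈ F(0). Then lip F(0, x̄) ≤ lip F̃(0, x̄), i.e., the exact Lipschitzian bound of the convex-system feasible map F at (0, x̄) does not exceed that of its linearization F̃ at (0, x̄). -/

import Mathlib

open Filter
open scoped ENNReal

noncomputable section

/-- The Banach space `l_∞(T)` of bounded real functions on `T` with sup norm. -/
abbrev Linf (T : Type*) : Type _ := lp (fun _ : T => ℝ) ∞

/-- The Dirac evaluation functional `δ_t ∈ l_∞(T)*`. -/
def dirac (T : Type*) (t : T) : Linf T →L[ℝ] ℝ :=
  LinearMap.mkContinuous
    { toFun := fun p => p t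
      map_add' := fun p q => by simp [lp.coeFn_add]
      map_smul' := fun c p => by simp [lp.coeFn_smul] }
    1 (fun p => by rw [one_mul]; exact lp.norm_apply_le_norm ENNReal.top_ne_zero p t)

variable {X : Type*} [NormedAddCommGroup X] [NormedSpace ℝ X]

/-- Fenchel conjugate of an extended-real-valued function. -/
def conj (g : X → EReal) (u : X →L[ℝ] ℝ) : EReal :=
  ⨆ x : X, (u x : EReal) - g x

/-- `dom g* = {u* : g*(u*) < +∞}`. -/
def domConj (g : X → EReal) : Set (X →L[ℝ] ℝ) := {u | conj g u < ⊤}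

/-- `gph g* = {(u*, g*(u*)) : u* ∈ dom g*}`. -/
def gphConj (g : X → EReal) : Set ((X →L[ℝ] ℝ) × ℝ) :=
  {q | conj g q.1 = (q.2 : EReal)}

/-- `epi g* = {(u*, γ) : g*(u*) ≤ γ}`. -/
def epiConj (g : X → EReal) : Set ((X →L[ℝ] ℝ) × ℝ) :=
  {q | conj g q.1 ≤ (q.2 : EReal)}

/-- A proper extended-real-valued function: never `⊥`, not identically `⊤`. -/
def ErealProper (g : X → EReal) : Prop := (∀ x, g x ≠ ⊥) ∧ ∃ x, g x ≠ ⊤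

/-- Convexity of an extended-real-valued function. -/
def ErealConvexOn (g : X → EReal) : Prop :=
  ∀ x y : X, ∀ a b : ℝ, 0 ≤ a → 0 ≤ b → a + b = 1 →
    g (a • x + b • y) ≤ (a : EReal) * g x + (b : EReal) * g y

variable {T : Type*}

/-- The feasible solution map `F(p) = {x : f_t(x) ≤ p_t ∀ t}`. -/
def feas (f : T → X → EReal) (p : Linf T) : Set X :=
  {x | ∀ t, f t x ≤ ((p t : ℝ) : EReal)}

/-- The graph of the feasible solution map. -/
def feasGraph (f : T → X → EReal) : Set (Linf T × X) :=
  {q | q.2 ∈ feas f q.1}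

/-- Lipschitz-like (Aubin) property of a set-valued map (given by its graph `G`)
around `(z̄, ȳ) ∈ G` with modulus `ℓ`. -/
def LipLike {Z Y : Type*} [NormedAddCommGroup Z] [NormedAddCommGroup Y]
    (G : Set (Z × Y)) (zb : Z) (yb : Y) (ℓ : ℝ) : Prop :=
  ∃ U ∈ nhds zb, ∃ V ∈ nhds yb, ∀ z ∈ U, ∀ u ∈ U, ∀ y ∈ V,
    (z, y) ∈ G → ∃ y', (u, y') ∈ G ∧ ‖y - y'‖ ≤ ℓ * ‖z - u‖

/-- The exact Lipschitzian bound `lip G(z̄, ȳ)` (value `∞` if the map is not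
Lipschitz-like around `(z̄, ȳ)`). -/
def lipBound {Z Y : Type*} [NormedAddCommGroup Z] [NormedAddCommGroup Y]
    (G : Set (Z × Y)) (zb : Z) (yb : Y) : ℝ≥0∞ :=
  sInf {c : ℝ≥0∞ | ∃ ℓ : ℝ, 0 ≤ ℓ ∧ LipLike G zb yb ℓ ∧ c = ENNReal.ofReal ℓ}

/-- Coderivative of a convex-graph map `G` at `(0, ȳ)`:
`z* ∈ D*G(0, ȳ)(y*)` iff `⟨z*, z⟩ − ⟨y*, y⟩ ≤ −⟨y*, ȳ⟩` for all `(z, y) ∈ G`. -/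
def coderivMem {Z Y : Type*} [NormedAddCommGroup Z] [NormedSpace ℝ Z]
    [NormedAddCommGroup Y] [NormedSpace ℝ Y]
    (G : Set (Z × Y)) (yb : Y) (ys : Y →L[ℝ] ℝ) (zs : Z →L[ℝ] ℝ) : Prop :=
  ∀ q ∈ G, zs q.1 - ys q.2 ≤ - ys yb

/-- The coderivative norm `‖D*G(0, ȳ)‖ = sup{‖z*‖ : z* ∈ D*G(0, ȳ)(y*), ‖y*‖ ≤ 1}`. -/
def coderivNorm {Z Y : Type*} [NormedAddCommGroup Z] [NormedSpace ℝ Z]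
    [NormedAddCommGroup Y] [NormedSpace ℝ Y]
    (G : Set (Z × Y)) (yb : Y) : ℝ≥0∞ :=
  ⨆ zs ∈ {zs : Z →L[ℝ] ℝ | ∃ ys : Y →L[ℝ] ℝ, ‖ys‖ ≤ 1 ∧ coderivMem G yb ys zs},
    (‖zs‖₊ : ℝ≥0∞)

/-- Weak* closure of a subset of `X* × ℝ`. -/
def wclosure2 (S : Set ((X →L[ℝ] ℝ) × ℝ)) : Set ((X →L[ℝ] ℝ) × ℝ) :=
  {q | ((StrongDual.toWeakDual q.1 : WeakDual ℝ X), q.2) ∈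
    closure ((fun w : (X →L[ℝ] ℝ) × ℝ =>
      ((StrongDual.toWeakDual w.1 : WeakDual ℝ X), w.2)) '' S)}

/-- Weak* closure of a subset of `l_∞(T)* × X* × ℝ` (the dual of `l_∞(T) × X × ℝ`). -/
def wclosure3 (S : Set ((Linf T →L[ℝ] ℝ) × ((X →L[ℝ] ℝ) × ℝ))) :
    Set ((Linf T →L[ℝ] ℝ) × ((X →L[ℝ] ℝ) × ℝ)) :=
  {q | ((StrongDual.toWeakDual q.1 : WeakDual ℝ (Linf T)),
        ((StrongDual.toWeakDual q.2.1 : WeakDual ℝ X), q.2.2)) ∈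
    closure ((fun w : (Linf T →L[ℝ] ℝ) × ((X →L[ℝ] ℝ) × ℝ) =>
      ((StrongDual.toWeakDual w.1 : WeakDual ℝ (Linf T)),
        ((StrongDual.toWeakDual w.2.1 : WeakDual ℝ X), w.2.2))) '' S)}

/-- Convex conic hull. -/
def coneHull {V : Type*} [AddCommMonoid V] [Module ℝ V] (S : Set V) : Set V :=
  {x | ∃ r : ℝ, 0 ≤ r ∧ ∃ y ∈ convexHull ℝ S, x = r • y}

/-- `C(p) = co(⋃ₜ gph (f_t − p_t)*)`. -/
def Cset (f : T → X → EReal) (p : Linf T) : Set ((X →L[ℝ] ℝ) × ℝ) :=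
  convexHull ℝ (⋃ t : T, gphConj (fun x => f t x - ((p t : ℝ) : EReal)))

/-- `H(p) = co(⋃ₜ epi (f_t − p_t)*)`. -/
def Hset (f : T → X → EReal) (p : Linf T) : Set ((X →L[ℝ] ℝ) × ℝ) :=
  convexHull ℝ (⋃ t : T, epiConj (fun x => f t x - ((p t : ℝ) : EReal)))

/-- Strong Slater condition for `σ(p)`. -/
def SSC (f : T → X → EReal) (p : Linf T) : Prop :=
  ∃ xh : X, (⨆ t : T, (f t xh - ((p t : ℝ) : EReal))) < 0

/-- `x̂` is a strong Slater point for `σ(0)`. -/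
def StrongSlaterPt (f : T → X → EReal) (xh : X) : Prop :=
  (⨆ t : T, f t xh) < 0


variable {X : Type*} [NormedAddCommGroup X] [NormedSpace ℝ X] {T : Type*}

/-- The index set `T̃ = {(t, u*) : u* ∈ dom f_t*}` of the linearized system. -/
def Ttilde (f : T → X → EReal) : Type _ :=
  {s : T × (X →L[ℝ] ℝ) // s.2 ∈ domConj (f s.1)}

/-- The linearized feasible solution map `F̃(ρ)`. -/
def feasTilde (f : T → X → EReal) (ρ : Linf (Ttilde f)) : Set X :=
  {x | ∀ s : Ttilde f, ((s.1.2 x : ℝ) : EReal) - conj (f s.1.1) s.1.2 ≤ ((ρ s : ℝ) : EReal)}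

/-- The embedding `p ↦ ρ_p`, `ρ_p(t, u*) = p_t`. -/
def rhoP (f : T → X → EReal) (p : Linf T) : Linf (Ttilde f) :=
  ⟨fun s => p s.1.1, memℓp_infty
    ⟨‖p‖, by rintro r ⟨s, rfl⟩; exact lp.norm_apply_le_norm ENNReal.top_ne_zero p s.1.1⟩⟩

/-- The subdifferential of convex analysis of `g` at `x`. -/
def subdiff (g : X → EReal) (x : X) : Set (X →L[ℝ] ℝ) :=
  {u | ∀ y, ((u y - u x : ℝ) : EReal) ≤ g y - g x}

end

/-!
By Fenchel–Moreau, a proper, lower semicontinuous, convex `g` satisfies `g x ≤ α` iff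
`⟨u*, x⟩ - g*(u*) ≤ α` for every `u* ∈ dom g*`, so `F(p) = F̃(ρ_p)` for all `p`. As `p ↦ ρ_p` is
nonexpansive and `ρ_0 = 0`, every Lipschitz-like modulus of `F̃` around `(0, x̄)` is one of `F`.

Fenchel–Moreau is proved by separating a point `(x, α)` lying below `g` from the closed convex
epigraph: a non-vertical hyperplane is the graph of an affine minorant of `g` exceeding `α` at `x`,
and a vertical one can be added with a large weight to any affine minorant (one exists because `g`
is proper) to produce such a minorant.
-/

def realEpigraph {X : Type*} (g : X → EReal) : Set (X × ℝ) := {q | g q.1 ≤ q.2}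

theorem LowerSemicontinuous.isClosed_realEpigraph {X : Type*} [TopologicalSpace X] {g : X → EReal}
    (hg : LowerSemicontinuous g) : IsClosed (realEpigraph g) :=
  hg.isClosed_epigraph.preimage
    (continuous_fst.prodMk (continuous_coe_real_ereal.comp continuous_snd))

section FenchelMoreau

variable {X : Type*} [NormedAddCommGroup X] [NormedSpace ℝ X] {g : X → EReal}

def IsAffineMinorant (g : X → EReal) (w : X →L[ℝ] ℝ) (d : ℝ) : Prop :=
  ∀ y, ((w y - d : ℝ) : EReal) ≤ g y

theorem ErealConvexOn.convex_realEpigraph (hg : ErealConvexOn g) : Convex ℝ (realEpigraph g) := by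
  rintro ⟨y₁, r₁⟩ h₁ ⟨y₂, r₂⟩ h₂ a b ha hb hab
  calc g (a • y₁ + b • y₂) ≤ (a : EReal) * g y₁ + (b : EReal) * g y₂ := hg y₁ y₂ a b ha hb hab
    _ ≤ (a : EReal) * r₁ + (b : EReal) * r₂ := by
        gcongr
        exacts [h₁, h₂]
    _ = ((a * r₁ + b * r₂ : ℝ) : EReal) := by norm_cast

theorem exists_separation_of_not_le (hl : LowerSemicontinuous g) (hc : ErealConvexOn g)
    {x : X} {α : ℝ} (hx : ¬ g x ≤ α) :
    ∃ (u : X →L[ℝ] ℝ) (s c : ℝ), (∀ y (r : ℝ), g y ≤ r → u y + r * s < c) ∧ c < u x + α * s := by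
  obtain ⟨Φ, c, hΦ, hΦx⟩ :=
    geometric_hahn_banach_closed_point hc.convex_realEpigraph hl.isClosed_realEpigraph
      (x := ((x, α) : X × ℝ)) hx
  have hΦ_apply : ∀ (y : X) (r : ℝ), Φ (y, r) = Φ.comp (.inl ℝ X ℝ) y + r * Φ (0, 1) := by
    intro y r
    have : ((y, r) : X × ℝ) = (y, 0) + r • (0, 1) := by simp
    rw [this, map_add, map_smul, smul_eq_mul, mul_comm]
    rfl
  refine ⟨Φ.comp (.inl ℝ X ℝ), Φ (0, 1), c, fun y r hyr => ?_, ?_⟩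
  · rw [← hΦ_apply]; exact hΦ (y, r) hyr
  · rw [← hΦ_apply]; exact hΦx

theorem isAffineMinorant_iff {w : X →L[ℝ] ℝ} {d : ℝ} :
    IsAffineMinorant g w d ↔ ∀ y (r : ℝ), g y ≤ r → w y - d ≤ r := by
  refine forall_congr' fun y => ⟨fun h r hr => ?_, fun h => ?_⟩
  · exact_mod_cast h.trans hr
  · exact EReal.le_of_forall_lt_iff_le.mp fun r hr => by exact_mod_cast h r hr.le

theorem exists_affineMinorant_of_separation {u : X →L[ℝ] ℝ} {s c : ℝ} (hs : s < 0)
    (hsep : ∀ y (r : ℝ), g y ≤ r → u y + r * s < c) {x : X} {α : ℝ} (hx : c < u x + α * s) :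
    ∃ w d, IsAffineMinorant g w d ∧ α < w x - d := by
  have hs' : 0 < -s := neg_pos.mpr hs
  refine ⟨(-s)⁻¹ • u, c / -s, isAffineMinorant_iff.mpr fun y r hr => ?_, ?_⟩
  · have := hsep y r hr
    change (-s)⁻¹ * u y - c / -s ≤ r
    rw [inv_mul_eq_div, ← sub_div, div_le_iff₀ hs']
    linarith
  · change α < (-s)⁻¹ * u x - c / -s
    rw [inv_mul_eq_div, ← sub_div, lt_div_iff₀ hs']
    linarith

theorem ErealProper.exists_affineMinorant (hp : ErealProper g) (hl : LowerSemicontinuous g)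
    (hc : ErealConvexOn g) : ∃ w d, IsAffineMinorant g w d := by
  obtain ⟨hbot, y₀, htop⟩ := hp
  lift g y₀ to ℝ using ⟨htop, hbot y₀⟩ with r₀ hr₀
  have hlt : ¬ g y₀ ≤ ((r₀ - 1 : ℝ) : EReal) := by rw [← hr₀]; norm_cast; linarith
  obtain ⟨u, s, c, hsep, hy₀⟩ := exists_separation_of_not_le hl hc hlt
  have hs : s < 0 := by nlinarith [hsep y₀ r₀ hr₀.ge]
  obtain ⟨w, d, hwd, -⟩ := exists_affineMinorant_of_separation hs hsep hy₀
  exact ⟨w, d, hwd⟩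

theorem IsAffineMinorant.add_smul {w u : X →L[ℝ] ℝ} {d c n : ℝ} (hwd : IsAffineMinorant g w d)
    (hu : ∀ y (r : ℝ), g y ≤ r → u y ≤ c) (hn : 0 ≤ n) :
    IsAffineMinorant g (w + n • u) (d + n * c) := by
  refine isAffineMinorant_iff.mpr fun y r hr => ?_
  have hw := isAffineMinorant_iff.mp hwd y r hr
  have hnu : n * u y ≤ n * c := mul_le_mul_of_nonneg_left (hu y r hr) hn
  change w y + n * u y - (d + n * c) ≤ r
  linarith

theorem ErealProper.le_coe_of_forall_affineMinorant (hp : ErealProper g)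
    (hl : LowerSemicontinuous g) (hc : ErealConvexOn g) {x : X} {α : ℝ}
    (h : ∀ w d, IsAffineMinorant g w d → w x - d ≤ α) : g x ≤ α := by
  by_contra hx
  obtain ⟨u, s, c, hsep, hx⟩ := exists_separation_of_not_le hl hc hx
  rcases lt_trichotomy s 0 with hs | rfl | hs
  · obtain ⟨w, d, hwd, hlt⟩ := exists_affineMinorant_of_separation hs hsep hx
    exact (h w d hwd).not_gt hlt
  · simp only [mul_zero, add_zero] at hsep hx
    obtain ⟨w, d, hwd⟩ := hp.exists_affineMinorant hl hc
    have hux : 0 < u x - c := sub_pos.mpr hx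
    set n := (|α - (w x - d)| + 1) / (u x - c)
    have hn : n * (u x - c) = |α - (w x - d)| + 1 := div_mul_cancel₀ _ hux.ne'
    have := h _ _ (hwd.add_smul (n := n) (fun y r hr => (hsep y r hr).le)
      (div_nonneg (by positivity) hux.le))
    change w x + n * u x - (d + n * c) ≤ α at this
    linarith [le_abs_self (α - (w x - d))]
  · -- the epigraph is unbounded above, so it cannot lie below a hyperplane with `s > 0`
    obtain ⟨hbot, y₀, htop⟩ := hp
    lift g y₀ to ℝ using ⟨htop, hbot y₀⟩ with r₀ hr₀
    set k := |c - u y₀ - r₀ * s| / s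
    have hk : k * s = |c - u y₀ - r₀ * s| := div_mul_cancel₀ _ hs.ne'
    have hk₀ : 0 ≤ k := by positivity
    have := hsep y₀ (r₀ + k) (by rw [← hr₀]; exact_mod_cast le_add_of_nonneg_right hk₀)
    linarith [le_abs_self (c - u y₀ - r₀ * s)]

theorem conj_le_coe_iff {w : X →L[ℝ] ℝ} {d : ℝ} : conj g w ≤ d ↔ IsAffineMinorant g w d := by
  refine iSup_le_iff.trans (forall_congr' fun y => ?_)
  rw [EReal.coe_sub,
    EReal.sub_le_iff_le_add (.inr (EReal.coe_ne_top d)) (.inr (EReal.coe_ne_bot d)),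
    EReal.sub_le_iff_le_add (.inl (EReal.coe_ne_bot d)) (.inl (EReal.coe_ne_top d)), add_comm]

theorem coe_apply_sub_conj_le (g : X → EReal) (w : X →L[ℝ] ℝ) (x : X) :
    ((w x : ℝ) : EReal) - conj g w ≤ g x := by
  have hle : ((w x : ℝ) : EReal) - g x ≤ conj g w := le_iSup (fun y => (w y : EReal) - g y) x
  induction h : g x with
  | bot => rw [h, EReal.coe_sub_bot, top_le_iff] at hle; simp [hle]
  | coe r =>
    rw [h, EReal.sub_le_iff_le_add (.inl (EReal.coe_ne_bot r)) (.inl (EReal.coe_ne_top r))] at hle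
    exact EReal.sub_le_of_le_add' hle
  | top => exact le_top

theorem ErealProper.le_coe_iff_forall_mem_domConj (hp : ErealProper g)
    (hl : LowerSemicontinuous g) (hc : ErealConvexOn g) {x : X} {α : ℝ} :
    g x ≤ α ↔ ∀ u ∈ domConj g, ((u x : ℝ) : EReal) - conj g u ≤ α := by
  refine ⟨fun h u _ => (coe_apply_sub_conj_le g u x).trans h, fun h => ?_⟩
  refine hp.le_coe_of_forall_affineMinorant hl hc fun w d hwd => ?_
  have hconj : conj g w ≤ d := conj_le_coe_iff.mpr hwd
  have hw : w ∈ domConj g := hconj.trans_lt (EReal.coe_lt_top d)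
  exact_mod_cast (EReal.sub_le_sub le_rfl hconj).trans (h w hw)

end FenchelMoreau

section LipschitzLike

variable {Z W Y : Type*} [NormedAddCommGroup Z] [NormedAddCommGroup W] [NormedAddCommGroup Y]
  {H : Set (W × Y)} {φ : Z → W} {zb : Z} {yb : Y}

theorem LipLike.preimage_of_lipschitzWith {K : NNReal} (hφ : LipschitzWith K φ) {ℓ : ℝ}
    (hℓ : 0 ≤ ℓ) (h : LipLike H (φ zb) yb ℓ) :
    LipLike {q | (φ q.1, q.2) ∈ H} zb yb (ℓ * K) := by
  obtain ⟨U, hU, V, hV, hH⟩ := h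
  refine ⟨φ ⁻¹' U, hφ.continuous.continuousAt.preimage_mem_nhds hU, V, hV,
    fun z hz u hu y hy hzy => ?_⟩
  obtain ⟨y', hy', hdist⟩ := hH (φ z) hz (φ u) hu y hy hzy
  refine ⟨y', hy', hdist.trans ?_⟩
  rw [mul_assoc, ← dist_eq_norm, ← dist_eq_norm]
  exact mul_le_mul_of_nonneg_left (hφ.dist_le_mul z u) hℓ

theorem lipBound_preimage_le_of_lipschitzWith_one (hφ : LipschitzWith 1 φ) :
    lipBound {q | (φ q.1, q.2) ∈ H} zb yb ≤ lipBound H (φ zb) yb := by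
  refine sInf_le_sInf ?_
  rintro _ ⟨ℓ, hℓ, h, rfl⟩
  have h' := h.preimage_of_lipschitzWith hφ hℓ
  rw [NNReal.coe_one, mul_one] at h'
  exact ⟨ℓ, hℓ, h', rfl⟩

end LipschitzLike

section Linearization

variable {X : Type*} [NormedAddCommGroup X] [NormedSpace ℝ X] {T : Type*}

theorem rhoP_zero (f : T → X → EReal) : rhoP f 0 = 0 := rfl

theorem lipschitzWith_one_rhoP (f : T → X → EReal) : LipschitzWith 1 (rhoP f) := by
  refine LipschitzWith.of_dist_le_mul fun p q => ?_
  rw [NNReal.coe_one, one_mul, dist_eq_norm, dist_eq_norm]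
  exact lp.norm_le_of_forall_le (norm_nonneg _) fun s =>
    lp.norm_apply_le_norm ENNReal.top_ne_zero (p - q) s.1.1

theorem feas_eq_feasTilde_rhoP {f : T → X → EReal} (hp : ∀ t, ErealProper (f t))
    (hl : ∀ t, LowerSemicontinuous (f t)) (hc : ∀ t, ErealConvexOn (f t)) (p : Linf T) :
    feas f p = feasTilde f (rhoP f p) := by
  ext x
  refine ⟨fun hx s => ?_, fun hx t => ?_⟩
  · exact ((hp _).le_coe_iff_forall_mem_domConj (hl _) (hc _)).mp (hx s.1.1) s.1.2 s.2
  · exact ((hp t).le_coe_iff_forall_mem_domConj (hl t) (hc t)).mpr fun u hu => hx ⟨(t, u), hu⟩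

end Linearization

theorem stmt_16_general {T : Type*}
    {X : Type*} [NormedAddCommGroup X] [NormedSpace ℝ X]
    (f : T → X → EReal)
    (hproper : ∀ t, ErealProper (f t))
    (hlsc : ∀ t, LowerSemicontinuous (f t))
    (hconv : ∀ t, ErealConvexOn (f t))
    (xb : X) :
    lipBound (feasGraph f) 0 xb ≤
      lipBound {q : Linf (Ttilde f) × X | q.2 ∈ feasTilde f q.1} 0 xb := by
  have hgraph : feasGraph f =
      {q | (rhoP f q.1, q.2) ∈ {q : Linf (Ttilde f) × X | q.2 ∈ feasTilde f q.1}} := by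
    ext ⟨p, x⟩
    exact Set.ext_iff.mp (feas_eq_feasTilde_rhoP hproper hlsc hconv p) x
  rw [hgraph, ← rhoP_zero f]
  exact lipBound_preimage_le_of_lipschitzWith_one (lipschitzWith_one_rhoP f)

theorem stmt_16 {T : Type*} [Nonempty T]
    {X : Type*} [NormedAddCommGroup X] [NormedSpace ℝ X] [CompleteSpace X]
    (f : T → X → EReal)
    (hproper : ∀ t, ErealProper (f t))
    (hlsc : ∀ t, LowerSemicontinuous (f t))
    (hconv : ∀ t, ErealConvexOn (f t))
    (xb : X) (hxb : xb ∈ feas f 0) :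
    lipBound (feasGraph f) 0 xb ≤
      lipBound {q : Linf (Ttilde f) × X | q.2 ∈ feasTilde f q.1} 0 xb :=
  stmt_16_general f hproper hlsc hconv xb
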